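/- arXiv:2204.02384 — 2 statements merged into one kernel-verified Lean document; each statement's English description precedes it below -/
import Mathlib

section
/- Let Ω ⊂ ℝⁿ be a bounded convex domain with smooth boundary, f : ℝ → ℝ smooth with f > 0 and f'' ≤ 0 on ℝ, and u ∈ C^∞(closure of Ω) a solution of -Δu = f(u) in Ω with u = 0 on ∂Ω. If the Hessian D²u is negative semidefinite at every point of ∂Ω, then u is concave on Ω. -/
open scoped ContDiff
open Filter Set

section aux
variable {E : Type*} [NormedAddCommGroup E] [NormedSpace ℝ E]

/-- directional derivative operator -/
noncomputable def Dd (v : E) (g : E → ℝ) : E → ℝ := fun y => fderiv ℝ g y v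

lemma Dd_contDiffAt {g : E → ℝ} {x : E} {v : E} (hg : ContDiffAt ℝ ∞ g x) :
    ContDiffAt ℝ ∞ (Dd v g) x :=
  (hg.fderiv_right (le_of_eq ENat.coe_top_add_one)).clm_apply contDiffAt_const

lemma Dd_eq_snd {g : E → ℝ} {x : E} (hg : ContDiffAt ℝ ∞ g x) (v w : E) :
    Dd v (Dd w g) x = fderiv ℝ (fderiv ℝ g) x v w := by
  have hd : DifferentiableAt ℝ (fderiv ℝ g) x :=
    (hg.fderiv_right (le_of_eq ENat.coe_top_add_one)).differentiableAt
      (by simp)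
  have : Dd w g = fun y => (fderiv ℝ g y) w := rfl
  rw [Dd, this]
  change fderiv ℝ (fun y => (fderiv ℝ g y) ((fun _ => w) y)) x v = _
  rw [fderiv_clm_apply hd (differentiableAt_const w)]
  simp

lemma Dd_swap {g : E → ℝ} {x : E} (hg : ContDiffAt ℝ ∞ g x) (v w : E) :
    Dd v (Dd w g) x = Dd w (Dd v g) x := by
  rw [Dd_eq_snd hg, Dd_eq_snd hg]
  exact (hg.isSymmSndFDerivAt (by rw [minSmoothness_of_isRCLikeNormedField]; exact_mod_cast ENat.natCast_le_of_coe_top_le_withTop le_rfl 2)).eq v w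

lemma Dd_congr_on {s : Set E} (hs : IsOpen s) {g₁ g₂ : E → ℝ} (h : ∀ y ∈ s, g₁ y = g₂ y)
    {x : E} (hx : x ∈ s) (v : E) : Dd v g₁ x = Dd v g₂ x := by
  unfold Dd
  rw [Filter.EventuallyEq.fderiv_eq (Filter.eventually_of_mem (hs.mem_nhds hx) h)]

end aux
open Filter Set Topology Bornology
lemma second_deriv_test_max {g g' : ℝ → ℝ} {L : ℝ}
    (hg : ∀ᶠ t in 𝓝 (0:ℝ), HasDerivAt g (g' t) t)
    (hg' : HasDerivAt g' L 0) (hmax : IsLocalMax g 0) : L ≤ 0 := by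
  by_contra hL
  push_neg at hL
  have h0 : g' 0 = 0 := by
    have hd := hg.self_of_nhds
    have h := hmax.deriv_eq_zero
    rwa [hd.deriv] at h
  have hslope : Tendsto (fun t => g' t / t) (𝓝[≠] (0:ℝ)) (𝓝 L) := by
    have h := hasDerivAt_iff_tendsto_slope.mp hg'
    have : (slope g' 0) = fun t => g' t / t := by
      funext t; simp [slope_def_field, h0]
    rwa [this] at h
  have hpos : ∀ᶠ t in 𝓝[≠] (0:ℝ), 0 < g' t / t :=
    hslope.eventually (eventually_gt_nhds hL)
  have hpos' : ∀ᶠ t in 𝓝 (0:ℝ), t ≠ 0 → 0 < g' t / t := by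
    rwa [eventually_nhdsWithin_iff] at hpos
  have hall : ∀ᶠ t in 𝓝 (0:ℝ),
      (t ≠ 0 → 0 < g' t / t) ∧ HasDerivAt g (g' t) t ∧ g t ≤ g 0 :=
    hpos'.and (hg.and hmax)
  obtain ⟨δ, hδ, hδall⟩ := Metric.eventually_nhds_iff.mp hall
  have hmem : ∀ t : ℝ, t ∈ Icc (0:ℝ) (δ/2) → dist t 0 < δ := by
    intro t ht
    rw [Real.dist_eq, sub_zero, abs_of_nonneg ht.1]
    linarith [ht.2]
  have hcont : ContinuousOn g (Icc (0:ℝ) (δ/2)) := fun t ht =>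
    ((hδall (hmem t ht)).2.1).continuousAt.continuousWithinAt
  have hmono : StrictMonoOn g (Icc (0:ℝ) (δ/2)) := by
    apply strictMonoOn_of_deriv_pos (convex_Icc _ _) hcont
    intro t ht
    rw [interior_Icc] at ht
    have hd : dist t 0 < δ := by
      rw [Real.dist_eq, sub_zero, abs_of_pos ht.1]; linarith [ht.2]
    have h := hδall hd
    rw [h.2.1.deriv]
    have hq := h.1 (ne_of_gt ht.1)
    have he : t * (g' t / t) = g' t := by
      rw [mul_comm]; exact div_mul_cancel₀ _ (ne_of_gt ht.1)
    rw [← he]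
    exact mul_pos ht.1 hq
  have h1 : g 0 < g (δ/2) :=
    hmono (by constructor <;> [rfl; positivity]) (by constructor <;> [positivity; rfl])
      (by positivity)
  have h2 : g (δ/2) ≤ g 0 := (hδall (hmem _ (by constructor <;> [positivity; rfl]))).2.2
  linarith

lemma deriv_eq_zero_of_pos_concave {f : ℝ → ℝ} (hf1 : Differentiable ℝ f)
    (hf2 : Differentiable ℝ (deriv f))
    (hfpos : ∀ t, 0 < f t) (hfconc : ∀ t, deriv (deriv f) t ≤ 0) (a : ℝ) :
    deriv f a = 0 := by
  have anti : Antitone (deriv f) := antitone_of_deriv_nonpos hf2 hfconc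
  by_contra hd
  rcases lt_or_gt_of_ne hd with hneg | hpos
  · -- deriv f a < 0 : go right
    obtain ⟨d, hdd⟩ : ∃ d, deriv f a = d := ⟨_, rfl⟩
    rw [hdd] at hneg
    have hfa := hfpos a
    have hq : 0 < f a / -d := div_pos hfa (by linarith)
    set t := a + (f a / -d + 1) with ht
    have hat : a < t := by rw [ht]; linarith
    obtain ⟨ξ, hξ, hslope⟩ := exists_deriv_eq_slope f hat
      (hf1.continuous.continuousOn) (hf1.differentiableOn)
    have h1 : deriv f ξ ≤ d := hdd ▸ anti (le_of_lt hξ.1)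
    rw [hslope, div_le_iff₀ (by linarith : (0:ℝ) < t - a)] at h1
    have e1 : t - a = f a / -d + 1 := by rw [ht]; ring
    have hd0 : d ≠ 0 := ne_of_lt hneg
    have e2 : d * (f a / -d + 1) = -(f a) + d := by
      rw [mul_add, mul_one, div_neg, mul_neg, mul_div_cancel₀ _ hd0]
    rw [e1, e2] at h1
    have := hfpos t
    linarith
  · -- deriv f a > 0 : go left
    obtain ⟨d, hdd⟩ : ∃ d, deriv f a = d := ⟨_, rfl⟩
    rw [hdd] at hpos
    have hfa := hfpos a
    have hq : 0 < f a / d := div_pos hfa hpos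
    set t := a - (f a / d + 1) with ht
    have hat : t < a := by rw [ht]; linarith
    obtain ⟨ξ, hξ, hslope⟩ := exists_deriv_eq_slope f hat
      (hf1.continuous.continuousOn) (hf1.differentiableOn)
    have h1 : d ≤ deriv f ξ := hdd ▸ anti (le_of_lt hξ.2)
    rw [hslope, le_div_iff₀ (by linarith : (0:ℝ) < a - t)] at h1
    have e1 : a - t = f a / d + 1 := by rw [ht]; ring
    have hd0 : d ≠ 0 := ne_of_gt hpos
    have e2 : d * (f a / d + 1) = f a + d := by
      rw [mul_add, mul_one, mul_div_cancel₀ _ hd0]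
    rw [e1, e2] at h1
    have := hfpos t
    linarith
open Filter Set Topology Bornology
section maxp

variable {n : ℕ}
local notation "E" => EuclideanSpace ℝ (Fin n)

noncomputable abbrev ee (i : Fin n) : EuclideanSpace ℝ (Fin n) := EuclideanSpace.single i (1:ℝ)

lemma phi_fderiv (i₀ : Fin n) (y : E) :
    HasFDerivAt (fun z : E => z i₀ * z i₀)
      ((2 * y i₀) • (EuclideanSpace.proj i₀ : E →L[ℝ] ℝ)) y := by
  have h := ((EuclideanSpace.proj i₀ : E →L[ℝ] ℝ).hasFDerivAt (x := y)).mul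
    ((EuclideanSpace.proj i₀ : E →L[ℝ] ℝ).hasFDerivAt (x := y))
  refine HasFDerivAt.congr_fderiv h ?_
  ext a
  simp [two_mul, add_mul]

lemma phi_d (i₀ : Fin n) (y a : E) :
    Dd a (fun z : E => z i₀ * z i₀) y = 2 * y i₀ * a i₀ := by
  rw [Dd, (phi_fderiv i₀ y).fderiv]
  simp

lemma lap_phi (i₀ : Fin n) (x : E) :
    ∑ i : Fin n, Dd (ee i) (Dd (ee i) (fun z : E => z i₀ * z i₀)) x = 2 := by
  have h2 : ∀ i : Fin n, Dd (ee i) (Dd (ee i) (fun z : E => z i₀ * z i₀)) x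
      = 2 * (ee i) i₀ * (ee i) i₀ := by
    intro i
    have he : Dd (ee i) (fun z : E => z i₀ * z i₀)
        = fun y : E => (2 * (ee i) i₀) * (EuclideanSpace.proj i₀ : E →L[ℝ] ℝ) y := by
      funext y
      rw [phi_d]
      have : ((EuclideanSpace.proj i₀ : E →L[ℝ] ℝ)) y = y i₀ := rfl
      rw [this]
      ring
    rw [Dd, he, fderiv_const_mul ((EuclideanSpace.proj i₀ : E →L[ℝ] ℝ).differentiableAt),
      ContinuousLinearMap.fderiv]
    have : ((EuclideanSpace.proj i₀ : E →L[ℝ] ℝ)) (ee i) = (ee i) i₀ := rfl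
    simp only [ContinuousLinearMap.coe_smul', Pi.smul_apply, smul_eq_mul, this]
  rw [Finset.sum_congr rfl (fun i _ => h2 i)]
  have h3 : ∀ i : Fin n, (2:ℝ) * (ee i) i₀ * (ee i) i₀
      = if i = i₀ then 2 else 0 := by
    intro i
    by_cases h : i = i₀
    · simp [ee, EuclideanSpace.single_apply, h]
    · simp [ee, EuclideanSpace.single_apply, h, Ne.symm h]
  rw [Finset.sum_congr rfl (fun i _ => h3 i), Finset.sum_ite_eq' _ i₀]
  simp

end maxp
lemma le1' : (∞ : WithTop ℕ∞) ≠ 0 := by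
  simp

lemma max_principle {n : ℕ} (i₀ : Fin n) {Ω : Set (EuclideanSpace ℝ (Fin n))}
    (hopen : IsOpen Ω) (hne : Ω.Nonempty) (hbdd : Bornology.IsBounded Ω)
    {W w : EuclideanSpace ℝ (Fin n) → ℝ}
    (hWcont : ContinuousOn W (closure Ω))
    (hWw : ∀ x ∈ Ω, W x = w x)
    (hsm : ∀ x ∈ Ω, ContDiffAt ℝ ∞ w x)
    (hharm : ∀ x ∈ Ω, ∑ i : Fin n, Dd (ee i) (Dd (ee i) w) x = 0)
    (hbc : ∀ x ∈ frontier Ω, W x ≤ 0) :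
    ∀ x ∈ closure Ω, W x ≤ 0 := by
  have hπc := (EuclideanSpace.proj i₀ : EuclideanSpace ℝ (Fin n) →L[ℝ] ℝ).continuous
  set φ : EuclideanSpace ℝ (Fin n) → ℝ := fun z => z i₀ * z i₀ with hφdef
  have hφc : Continuous φ := hπc.mul hπc
  have hφsm : ContDiff ℝ ∞ φ :=
    ((EuclideanSpace.proj i₀ : EuclideanSpace ℝ (Fin n) →L[ℝ] ℝ).contDiff).mul
      ((EuclideanSpace.proj i₀ : EuclideanSpace ℝ (Fin n) →L[ℝ] ℝ).contDiff)
  have hK : IsCompact (closure Ω) :=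
    Metric.isCompact_of_isClosed_isBounded isClosed_closure hbdd.closure
  obtain ⟨z, hzK, hzmax⟩ := hK.exists_isMaxOn hne.closure hφc.continuousOn
  have hM0 : 0 ≤ φ z := mul_self_nonneg _
  have main : ∀ ε : ℝ, 0 < ε → ∀ x ∈ closure Ω, W x ≤ ε * φ z := by
    intro ε hε x hx
    set Wε : EuclideanSpace ℝ (Fin n) → ℝ := fun y => W y + ε * φ y with hWεdef
    have hWεc : ContinuousOn Wε (closure Ω) :=
      hWcont.add ((continuous_const.mul hφc).continuousOn)
    obtain ⟨x1, hx1K, hx1max⟩ := hK.exists_isMaxOn hne.closure hWεc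
    by_cases hx1 : x1 ∈ Ω
    · exfalso
      set wε : EuclideanSpace ℝ (Fin n) → ℝ := fun y => w y + ε * φ y with hwεdef
      have hwsm : ∀ y ∈ Ω, ContDiffAt ℝ ∞ wε y := fun y hy =>
        (hsm y hy).add (contDiffAt_const.mul hφsm.contDiffAt)
      have hΩn : Ω ∈ 𝓝 x1 := hopen.mem_nhds hx1
      have hKn : closure Ω ∈ 𝓝 x1 := mem_of_superset hΩn subset_closure
      have heq : ∀ y ∈ Ω, Wε y = wε y := by
        intro y hy; simp only [hWεdef, hwεdef, hWw y hy]
      have hloc : ∀ᶠ y in 𝓝 x1, wε y ≤ wε x1 := by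
        filter_upwards [Filter.inter_mem hKn hΩn] with y hy
        rw [← heq y hy.2, ← heq x1 hx1]
        exact hx1max hy.1
      have hLle : ∀ i : Fin n, Dd (ee i) (Dd (ee i) wε) x1 ≤ 0 := by
        intro i
        set a : EuclideanSpace ℝ (Fin n) := ee i with ha
        set ℓ : ℝ → EuclideanSpace ℝ (Fin n) := fun t => x1 + t • a with hℓdef
        have hℓ0 : ℓ 0 = x1 := by simp [hℓdef]
        have hℓd : ∀ t : ℝ, HasDerivAt ℓ a t := by
          intro t
          have h := ((hasDerivAt_id t).smul_const a).const_add x1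
          exact h.congr_deriv (by simp)
        have hℓc : Continuous ℓ :=
          continuous_const.add (continuous_id.smul continuous_const)
        have hℓt : Filter.Tendsto ℓ (𝓝 0) (𝓝 x1) := by
          rw [← hℓ0]; exact hℓc.tendsto 0
        have hev : ∀ᶠ t in 𝓝 (0:ℝ), ℓ t ∈ Ω := hℓt hΩn
        have hg : ∀ᶠ t in 𝓝 (0:ℝ), HasDerivAt (fun s => wε (ℓ s)) (Dd a wε (ℓ t)) t := by
          filter_upwards [hev] with t ht
          have hdiff : DifferentiableAt ℝ wε (ℓ t) := (hwsm _ ht).differentiableAt le1'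
          exact hdiff.hasFDerivAt.comp_hasDerivAt t (hℓd t)
        have hg' : HasDerivAt (fun t => Dd a wε (ℓ t)) (Dd a (Dd a wε) x1) 0 := by
          have hdiff : DifferentiableAt ℝ (Dd a wε) x1 :=
            (Dd_contDiffAt (hwsm _ hx1)).differentiableAt le1'
          have hdiff' : HasFDerivAt (Dd a wε) (fderiv ℝ (Dd a wε) x1) (ℓ 0) :=
            hℓ0 ▸ hdiff.hasFDerivAt
          exact hdiff'.comp_hasDerivAt 0 (hℓd 0)
        have hlm : IsLocalMax (fun t => wε (ℓ t)) 0 := by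
          filter_upwards [hℓt.eventually hloc] with t h
          simpa [hℓ0] using h
        exact second_deriv_test_max hg hg' hlm
      have hterm : ∀ i : Fin n, Dd (ee i) (Dd (ee i) wε) x1
          = Dd (ee i) (Dd (ee i) w) x1 + ε * Dd (ee i) (Dd (ee i) φ) x1 := by
        intro i
        have hin : ∀ y ∈ Ω, Dd (ee i) wε y = Dd (ee i) w y + ε * Dd (ee i) φ y := by
          intro y hy
          have hdw : DifferentiableAt ℝ w y := (hsm y hy).differentiableAt le1'
          have hdφ : DifferentiableAt ℝ φ y := hφsm.differentiable le1' y
          have h1 : fderiv ℝ wε y = fderiv ℝ w y + ε • fderiv ℝ φ y := by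
            rw [hwεdef]
            rw [fderiv_fun_add hdw (hdφ.const_mul ε), fderiv_const_mul hdφ ε]
          show (fderiv ℝ wε y) (ee i) = _
          rw [h1]
          simp [Dd]
        have houter : Dd (ee i) (Dd (ee i) wε) x1
            = Dd (ee i) (fun y => Dd (ee i) w y + ε * Dd (ee i) φ y) x1 :=
          Dd_congr_on hopen hin hx1 _
        rw [houter]
        have hdw2 : DifferentiableAt ℝ (Dd (ee i) w) x1 :=
          (Dd_contDiffAt (hsm x1 hx1)).differentiableAt le1'
        have hdφ2 : DifferentiableAt ℝ (Dd (ee i) φ) x1 :=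
          (Dd_contDiffAt hφsm.contDiffAt).differentiableAt le1'
        have h2 : fderiv ℝ (fun y => Dd (ee i) w y + ε * Dd (ee i) φ y) x1
            = fderiv ℝ (Dd (ee i) w) x1 + ε • fderiv ℝ (Dd (ee i) φ) x1 := by
          rw [fderiv_fun_add hdw2 (hdφ2.const_mul ε), fderiv_const_mul hdφ2 ε]
        show (fderiv ℝ (fun y => Dd (ee i) w y + ε * Dd (ee i) φ y) x1) (ee i) = _
        rw [h2]
        simp [Dd]
      have hsum : ∑ i : Fin n, Dd (ee i) (Dd (ee i) wε) x1 = 2 * ε := by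
        rw [Finset.sum_congr rfl (fun i _ => hterm i), Finset.sum_add_distrib,
          hharm x1 hx1, ← Finset.mul_sum, lap_phi]
        ring
      have hle : ∑ i : Fin n, Dd (ee i) (Dd (ee i) wε) x1 ≤ 0 :=
        Finset.sum_nonpos fun i _ => hLle i
      rw [hsum] at hle
      linarith
    · have hfr : x1 ∈ frontier Ω := by
        rw [hopen.frontier_eq]; exact ⟨hx1K, hx1⟩
      have h1 : Wε x ≤ Wε x1 := hx1max hx
      have h2 : W x1 ≤ 0 := hbc _ hfr
      have h3 : φ x1 ≤ φ z := hzmax hx1K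
      have h4 : 0 ≤ φ x := mul_self_nonneg _
      simp only [hWεdef] at h1
      nlinarith
  intro x hx
  rcases eq_or_lt_of_le hM0 with hM | hM
  · have h := main 1 one_pos x hx
    rw [← hM] at h
    linarith
  · have h : ∀ η : ℝ, 0 < η → W x ≤ 0 + η := by
      intro η hη
      have h := main (η / φ z) (div_pos hη hM) x hx
      rw [div_mul_cancel₀ _ (ne_of_gt hM)] at h
      linarith
    exact le_of_forall_pos_le_add h
/-- A set `Ω ⊆ ℝⁿ` has smooth boundary if near each boundary point it is locally the
sublevel set of a smooth function with nonvanishing derivative. -/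
def HasSmoothBoundary {n : ℕ} (Ω : Set (EuclideanSpace ℝ (Fin n))) : Prop :=
  ∀ p ∈ frontier Ω, ∃ (U : Set (EuclideanSpace ℝ (Fin n)))
    (φ : EuclideanSpace ℝ (Fin n) → ℝ),
      IsOpen U ∧ p ∈ U ∧ ContDiff ℝ (⊤ : ℕ∞) φ ∧ (∀ x ∈ U, fderiv ℝ φ x ≠ 0) ∧
      Ω ∩ U = {x ∈ U | φ x < 0}

/-- Theorem 1.4: on a bounded convex domain with smooth boundary, if
`-Δu = f(u)` with `u = 0` on the boundary, `f > 0`, `f'' ≤ 0`, and the Hessian `D²u`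
is negative semidefinite at every boundary point, then `u` is concave on `Ω`. -/
theorem stmt_12 (n : ℕ) (Ω : Set (EuclideanSpace ℝ (Fin n)))
    (hopen : IsOpen Ω) (hconn : IsConnected Ω)
    (hbdd : Bornology.IsBounded Ω) (hconv : Convex ℝ Ω)
    (hsmooth : HasSmoothBoundary Ω)
    (f : ℝ → ℝ) (hf : ContDiff ℝ (⊤ : ℕ∞) f)
    (hfpos : ∀ t, 0 < f t) (hfconc : ∀ t, deriv (deriv f) t ≤ 0)
    (u : EuclideanSpace ℝ (Fin n) → ℝ) (hu : ContDiffOn ℝ (⊤ : ℕ∞) u (closure Ω))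
    (hpde : ∀ x ∈ Ω, -(∑ i : Fin n, iteratedFDerivWithin ℝ 2 u (closure Ω) x
      ![EuclideanSpace.single i (1 : ℝ), EuclideanSpace.single i (1 : ℝ)]) = f (u x))
    (hbc : ∀ x ∈ frontier Ω, u x = 0)
    (hhess : ∀ p ∈ frontier Ω, ∀ v : EuclideanSpace ℝ (Fin n),
      iteratedFDerivWithin ℝ 2 u (closure Ω) p ![v, v] ≤ 0) :
    ConcaveOn ℝ Ω u := by
  classical
  have hne : Ω.Nonempty := hconn.nonempty
  -- the case n = 0 : the PDE is contradictory
  rcases Nat.eq_zero_or_pos n with h0 | hn0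
  · subst h0
    obtain ⟨x0, hx0⟩ := hne
    have h := hpde x0 hx0
    simp only [Finset.univ_eq_empty, Finset.sum_empty, neg_zero] at h
    exact absurd h.symm (ne_of_gt (hfpos (u x0)))
  have i₀ : Fin n := ⟨0, hn0⟩
  -- basic setup
  have hKn : ∀ x ∈ Ω, closure Ω ∈ 𝓝 x := fun x hx =>
    mem_of_superset (hopen.mem_nhds hx) subset_closure
  have hUD : UniqueDiffOn ℝ (closure Ω) :=
    uniqueDiffOn_convex hconv.closure (hne.mono (interior_maximal subset_closure hopen))
  have huI : ContDiffOn ℝ ∞ u (closure Ω) := hu.of_le (by simp)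
  have smu : ∀ x ∈ Ω, ContDiffAt ℝ ∞ u x := fun x hx => huI.contDiffAt (hKn x hx)
  -- conversion between iteratedFDerivWithin and Dd
  have hconv2 : ∀ x ∈ Ω, ∀ v w : EuclideanSpace ℝ (Fin n),
      iteratedFDerivWithin ℝ 2 u (closure Ω) x ![v, w] = Dd v (Dd w u) x := by
    intro x hx v w
    rw [iteratedFDerivWithin_two_apply u hUD (subset_closure hx)]
    have hm0 : (![v, w] : Fin 2 → EuclideanSpace ℝ (Fin n)) 0 = v := rfl
    have hm1 : (![v, w] : Fin 2 → EuclideanSpace ℝ (Fin n)) 1 = w := rfl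
    rw [hm0, hm1, fderivWithin_of_mem_nhds (hKn x hx)]
    have heq : fderiv ℝ (fderivWithin ℝ u (closure Ω)) x = fderiv ℝ (fderiv ℝ u) x := by
      apply Filter.EventuallyEq.fderiv_eq
      filter_upwards [hopen.mem_nhds hx] with y hy
      exact fderivWithin_of_mem_nhds (hKn y hy)
    rw [heq, Dd_eq_snd (smu x hx) v w]
  -- f is constant
  have hfI : ContDiff ℝ ∞ f := hf.of_le (by simp)
  have hf1 : Differentiable ℝ f := hfI.differentiable le1'
  have hf2 : Differentiable ℝ (deriv f) :=
    ((contDiff_infty_iff_deriv.mp hfI).2).differentiable le1'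
  have hder0 : ∀ t, deriv f t = 0 := deriv_eq_zero_of_pos_concave hf1 hf2 hfpos hfconc
  have hconst : ∀ t, f t = f 0 := fun t => is_const_of_deriv_eq_zero hf1 hder0 t 0
  -- the Laplacian of u is the constant -(f 0) on Ω
  have hlap : ∀ x ∈ Ω, ∑ i : Fin n, Dd (ee i) (Dd (ee i) u) x = -(f 0) := by
    intro x hx
    have h := hpde x hx
    rw [hconst (u x)] at h
    have h2 : ∑ i : Fin n, iteratedFDerivWithin ℝ 2 u (closure Ω) x
        ![EuclideanSpace.single i (1 : ℝ), EuclideanSpace.single i (1 : ℝ)]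
        = ∑ i : Fin n, Dd (ee i) (Dd (ee i) u) x :=
      Finset.sum_congr rfl fun i _ => hconv2 x hx _ _
    rw [h2] at h
    linarith
  -- smoothness propagation
  have lemS : ∀ (g : EuclideanSpace ℝ (Fin n) → ℝ), (∀ x ∈ Ω, ContDiffAt ℝ ∞ g x) →
      ∀ a, ∀ x ∈ Ω, ContDiffAt ℝ ∞ (Dd a g) x := fun g hg a x hx => Dd_contDiffAt (hg x hx)
  -- the second directional derivatives are harmonic on Ω
  have hharm : ∀ v : EuclideanSpace ℝ (Fin n), ∀ x ∈ Ω,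
      ∑ i : Fin n, Dd (ee i) (Dd (ee i) (Dd v (Dd v u))) x = 0 := by
    intro v x hx
    have smv : ∀ y ∈ Ω, ContDiffAt ℝ ∞ (Dd v u) y := lemS u smu v
    -- commute derivatives: D_a D_a D_v D_v u = D_v D_v D_a D_a u on Ω
    have total : ∀ (a : EuclideanSpace ℝ (Fin n)), ∀ y ∈ Ω,
        Dd a (Dd a (Dd v (Dd v u))) y = Dd v (Dd v (Dd a (Dd a u))) y := by
      intro a y hy
      have s1 : ∀ z ∈ Ω, Dd a (Dd v (Dd v u)) z = Dd v (Dd a (Dd v u)) z :=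
        fun z hz => Dd_swap (smv z hz) a v
      have s1' : Dd a (Dd a (Dd v (Dd v u))) y = Dd a (Dd v (Dd a (Dd v u))) y :=
        Dd_congr_on hopen s1 hy a
      have s2 : Dd a (Dd v (Dd a (Dd v u))) y = Dd v (Dd a (Dd a (Dd v u))) y :=
        Dd_swap (lemS _ smv a y hy) a v
      have s3 : ∀ z ∈ Ω, Dd a (Dd v u) z = Dd v (Dd a u) z :=
        fun z hz => Dd_swap (smu z hz) a v
      have s3' : ∀ z ∈ Ω, Dd a (Dd a (Dd v u)) z = Dd a (Dd v (Dd a u)) z :=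
        fun z hz => Dd_congr_on hopen s3 hz a
      have s4 : ∀ z ∈ Ω, Dd a (Dd a (Dd v u)) z = Dd v (Dd a (Dd a u)) z := by
        intro z hz
        rw [s3' z hz]
        exact Dd_swap (lemS _ smu a z hz) a v
      have s4' : Dd v (Dd a (Dd a (Dd v u))) y = Dd v (Dd v (Dd a (Dd a u))) y :=
        Dd_congr_on hopen s4 hy v
      rw [s1', s2, s4']
    -- sum and use that the Laplacian is constant
    have hdiffA : ∀ (i : Fin n), ∀ y ∈ Ω, DifferentiableAt ℝ (Dd (ee i) (Dd (ee i) u)) y :=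
      fun i y hy => (lemS _ (lemS _ smu (ee i)) (ee i) y hy).differentiableAt le1'
    have hs1 : ∀ y ∈ Ω, Dd v (fun z => ∑ i : Fin n, Dd (ee i) (Dd (ee i) u) z) y
        = ∑ i : Fin n, Dd v (Dd (ee i) (Dd (ee i) u)) y := by
      intro y hy
      show (fderiv ℝ (fun z => ∑ i : Fin n, Dd (ee i) (Dd (ee i) u) z) y) v = _
      rw [fderiv_fun_sum (fun i _ => hdiffA i y hy)]
      simp [Dd]
    have hs2 : ∀ y ∈ Ω, Dd v (fun z => ∑ i : Fin n, Dd (ee i) (Dd (ee i) u) z) y = 0 := by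
      intro y hy
      have hcg : Dd v (fun z => ∑ i : Fin n, Dd (ee i) (Dd (ee i) u) z) y
          = Dd v (fun _ => -(f 0)) y :=
        Dd_congr_on hopen (fun z hz => hlap z hz) hy v
      rw [hcg]
      simp [Dd]
    have hT0 : ∀ y ∈ Ω, (fun z => ∑ i : Fin n, Dd v (Dd (ee i) (Dd (ee i) u)) z) y = 0 := by
      intro y hy
      have := hs1 y hy
      rw [hs2 y hy] at this
      exact this.symm
    have hs3 : Dd v (fun z => ∑ i : Fin n, Dd v (Dd (ee i) (Dd (ee i) u)) z) x = 0 := by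
      have hcg : Dd v (fun z => ∑ i : Fin n, Dd v (Dd (ee i) (Dd (ee i) u)) z) x
          = Dd v (fun _ => (0:ℝ)) x :=
        Dd_congr_on hopen hT0 hx v
      rw [hcg]
      simp [Dd]
    have hs4 : Dd v (fun z => ∑ i : Fin n, Dd v (Dd (ee i) (Dd (ee i) u)) z) x
        = ∑ i : Fin n, Dd v (Dd v (Dd (ee i) (Dd (ee i) u))) x := by
      show (fderiv ℝ (fun z => ∑ i : Fin n, Dd v (Dd (ee i) (Dd (ee i) u)) z) x) v = _
      rw [fderiv_fun_sum (fun i _ =>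
        (lemS _ (lemS _ (lemS _ smu (ee i)) (ee i)) v x hx).differentiableAt le1')]
      simp [Dd]
    have hfin : ∑ i : Fin n, Dd v (Dd v (Dd (ee i) (Dd (ee i) u))) x = 0 := by
      rw [← hs4, hs3]
    calc ∑ i : Fin n, Dd (ee i) (Dd (ee i) (Dd v (Dd v u))) x
        = ∑ i : Fin n, Dd v (Dd v (Dd (ee i) (Dd (ee i) u))) x :=
          Finset.sum_congr rfl fun i _ => total (ee i) x hx
      _ = 0 := hfin
  -- the maximum principle gives nonpositivity of second directional derivatives
  have key : ∀ x ∈ Ω, ∀ v : EuclideanSpace ℝ (Fin n), Dd v (Dd v u) x ≤ 0 := by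
    intro x hx v
    have hWcont : ContinuousOn
        (fun y => iteratedFDerivWithin ℝ 2 u (closure Ω) y ![v, v]) (closure Ω) := by
      have h := huI.continuousOn_iteratedFDerivWithin (m := 2)
        (by exact_mod_cast ENat.natCast_le_of_coe_top_le_withTop le_rfl 2) hUD
      exact (continuous_eval_const ![v, v]).comp_continuousOn h
    have hmp := max_principle i₀ hopen hne hbdd hWcont
      (fun y hy => hconv2 y hy v v)
      (lemS _ (lemS _ smu v) v)
      (hharm v)
      (fun y hy => hhess y hy v)
    have := hmp x (subset_closure hx)
    rwa [hconv2 x hx v v] at this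
  -- conclude concavity along segments
  refine ⟨hconv, ?_⟩
  intro p hp q hq a b ha hb hab
  set d : EuclideanSpace ℝ (Fin n) := q - p with hd
  set γ : ℝ → EuclideanSpace ℝ (Fin n) := fun t => p + t • d with hγ
  have hγc : Continuous γ := continuous_const.add (continuous_id.smul continuous_const)
  have hγd : ∀ t : ℝ, HasDerivAt γ d t := by
    intro t
    have h := ((hasDerivAt_id t).smul_const d).const_add p
    exact h.congr_deriv (by simp)
  have hseg : ∀ t ∈ Set.Icc (0:ℝ) 1, γ t ∈ Ω := by
    intro t ht
    have : γ t = (1 - t) • p + t • q := by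
      rw [hγ, hd]
      module
    rw [this]
    exact hconv hp hq (by linarith [ht.2]) ht.1 (by ring)
  have hO : IsOpen (γ ⁻¹' Ω) := hopen.preimage hγc
  have hsub : Set.Icc (0:ℝ) 1 ⊆ γ ⁻¹' Ω := hseg
  have hgder : ∀ t ∈ γ ⁻¹' Ω, HasDerivAt (fun s => u (γ s)) (Dd d u (γ t)) t := by
    intro t ht
    exact ((smu _ ht).differentiableAt le1').hasFDerivAt.comp_hasDerivAt t (hγd t)
  have hderiv_eq : ∀ t ∈ γ ⁻¹' Ω, deriv (fun s => u (γ s)) t = Dd d u (γ t) :=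
    fun t ht => (hgder t ht).deriv
  have hg2 : ∀ t ∈ γ ⁻¹' Ω, HasDerivAt (fun s => Dd d u (γ s)) (Dd d (Dd d u) (γ t)) t := by
    intro t ht
    exact ((lemS _ smu d _ ht).differentiableAt le1').hasFDerivAt.comp_hasDerivAt t (hγd t)
  have hconc1 : ConcaveOn ℝ (Set.Icc (0:ℝ) 1) (fun s => u (γ s)) := by
    apply concaveOn_of_deriv2_nonpos (convex_Icc 0 1)
    · exact fun t ht => ((hgder t (hsub ht)).continuousAt).continuousWithinAt
    · intro t ht
      rw [interior_Icc] at ht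
      exact ((hgder t (hsub (Set.Ioo_subset_Icc_self ht))).differentiableAt).differentiableWithinAt
    · intro t ht
      rw [interior_Icc] at ht
      have htO : t ∈ γ ⁻¹' Ω := hsub (Set.Ioo_subset_Icc_self ht)
      have hev : deriv (fun s => u (γ s)) =ᶠ[𝓝 t] (fun s => Dd d u (γ s)) := by
        filter_upwards [hO.mem_nhds htO] with s hs
        exact hderiv_eq s hs
      have hdat : DifferentiableAt ℝ (fun s => Dd d u (γ s)) t := (hg2 t htO).differentiableAt
      exact (hev.differentiableAt_iff.mpr hdat).differentiableWithinAt
    · intro t ht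
      rw [interior_Icc] at ht
      have htO : t ∈ γ ⁻¹' Ω := hsub (Set.Ioo_subset_Icc_self ht)
      have hev : deriv (fun s => u (γ s)) =ᶠ[𝓝 t] (fun s => Dd d u (γ s)) := by
        filter_upwards [hO.mem_nhds htO] with s hs
        exact hderiv_eq s hs
      have h2 : deriv^[2] (fun s => u (γ s)) t = deriv (deriv (fun s => u (γ s))) t := by
        simp [Function.iterate_succ_apply', Function.iterate_one]
      rw [h2, hev.deriv_eq, (hg2 t htO).deriv]
      exact key (γ t) htO d
  have h0m : (0:ℝ) ∈ Set.Icc (0:ℝ) 1 := by constructor <;> norm_num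
  have h1m : (1:ℝ) ∈ Set.Icc (0:ℝ) 1 := by constructor <;> norm_num
  have hcc := hconc1.2 h0m h1m ha hb hab
  have hγ0 : γ 0 = p := by simp [hγ]
  have hγ1 : γ 1 = q := by simp [hγ, hd]
  have hγb : γ (a • (0:ℝ) + b • 1) = a • p + b • q := by
    have hb' : a • (0:ℝ) + b • 1 = b := by simp [smul_eq_mul]
    rw [hb', hγ, hd]
    have ha' : a = 1 - b := by linarith
    rw [ha']
    module
  simpa only [hγ0, hγ1, hγb] using hcc
end

section
/- Let Ω ⊂ ℝⁿ be a bounded domain contained in the half-space {x₁ ≥ c} for some c > 0, let f : ℝ → ℝ be smooth with f > 0 and f'' ≤ 0, let u ∈ C^∞(closure of Ω) solve -Δu = f(u) with u = 0 on ∂Ω, and let e be a unit vector. For A > 0 and σ := f(0)/(sup_{x ∈ Ω̄} |x₁ f'(u(x))| + 1), set Q_A := u_ee - A·u - σ·A·x₁. Then Q_A cannot attain a maximum value of 0 at an interior point of Ω. Specifically, if p ∈ Ω is an interior point with Q_A(p) = 0 ≥ Q_A on Ω, then ΔQ_A(p) > 0, contradicting ΔQ_A(p) ≤ 0. -/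
open Filter Topology Set

/-! ### Auxiliary general lemmas -/

lemma coe1le : (1:WithTop ℕ∞) ≤ ((⊤:ℕ∞):WithTop ℕ∞) := by
  rw [show (1:WithTop ℕ∞) = ((1:ℕ∞):WithTop ℕ∞) from rfl]
  exact WithTop.coe_le_coe.2 le_top

lemma coe1ne : ((⊤:ℕ∞):WithTop ℕ∞) ≠ 0 := by
  exact WithTop.coe_ne_zero.2 ENat.top_ne_zero

lemma coe2le : (2 : WithTop ℕ∞) ≤ ((⊤:ℕ∞) : WithTop ℕ∞) := by
  rw [show (2 : WithTop ℕ∞) = ((2:ℕ∞) : WithTop ℕ∞) by rfl]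
  exact WithTop.coe_le_coe.2 le_top

section PD

variable {E : Type*} [NormedAddCommGroup E] [NormedSpace ℝ E]

/-- Directional derivative operator. -/
noncomputable def pd (a : E) (h : E → ℝ) (x : E) : ℝ := fderiv ℝ h x a

theorem pd_smooth {h : E → ℝ} {x : E} (a : E) (hh : ContDiffAt ℝ (⊤:ℕ∞) h x) :
    ContDiffAt ℝ (⊤:ℕ∞) (pd a h) x :=
  (hh.fderiv_right (by norm_num : ((⊤:ℕ∞):WithTop ℕ∞) + 1 ≤ (⊤:ℕ∞))).clm_apply
    (contDiffAt_const (c := a))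

theorem pd_comm {h : E → ℝ} {x : E} (hh : ContDiffAt ℝ (⊤:ℕ∞) h x) (a b : E) :
    pd b (pd a h) x = pd a (pd b h) x := by
  have hd : DifferentiableAt ℝ (fderiv ℝ h) x :=
    (hh.fderiv_right (by rw [one_add_one_eq_two]; exact coe2le)).differentiableAt one_ne_zero
  have key : ∀ v : E, fderiv ℝ (fun y => fderiv ℝ h y v) x
      = (fderiv ℝ (fderiv ℝ h) x).flip v := by
    intro v
    have := fderiv_clm_apply (c := fderiv ℝ h) (u := fun _ => v) hd (differentiableAt_const v)
    simpa using this
  have hsym := (hh.isSymmSndFDerivAt (by simpa using coe2le)).eq a b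
  show fderiv ℝ (pd a h) x b = fderiv ℝ (pd b h) x a
  have ha : fderiv ℝ (pd a h) x = (fderiv ℝ (fderiv ℝ h) x).flip a := key a
  have hb : fderiv ℝ (pd b h) x = (fderiv ℝ (fderiv ℝ h) x).flip b := key b
  rw [ha, hb]
  simpa using hsym.symm

theorem pd_congr {U : Set E} (hU : IsOpen U) {x : E} (hx : x ∈ U) {g g' : E → ℝ}
    (hgg : ∀ y ∈ U, g y = g' y) (a : E) : pd a g x = pd a g' x := by
  have : g =ᶠ[𝓝 x] g' := by
    filter_upwards [hU.mem_nhds hx] with y hy using hgg y hy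
  show fderiv ℝ g x a = fderiv ℝ g' x a
  rw [this.fderiv_eq]

theorem ddcomm {U : Set E} (hU : IsOpen U) {h : E → ℝ}
    (hh : ∀ y ∈ U, ContDiffAt ℝ (⊤:ℕ∞) h y) {p : E} (hp : p ∈ U) (a b : E) :
    pd b (pd b (pd a (pd a h))) p = pd a (pd a (pd b (pd b h))) p := by
  have h1 : ∀ y ∈ U, ∀ v : E, ContDiffAt ℝ (⊤:ℕ∞) (pd v h) y :=
    fun y hy v => pd_smooth v (hh y hy)
  have h2 : ∀ y ∈ U, ∀ v w : E, ContDiffAt ℝ (⊤:ℕ∞) (pd w (pd v h)) y :=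
    fun y hy v w => pd_smooth w (h1 y hy v)
  calc pd b (pd b (pd a (pd a h))) p
      = pd b (pd a (pd b (pd a h))) p := by
        refine pd_congr hU hp (fun y hy => ?_) b
        exact pd_comm (h1 y hy a) a b
    _ = pd a (pd b (pd b (pd a h))) p := pd_comm (h2 p hp a b) a b
    _ = pd a (pd b (pd a (pd b h))) p := by
        refine pd_congr hU hp (fun y hy => ?_) a
        refine pd_congr hU hy (fun z hz => ?_) b
        exact pd_comm (hh z hz) a b
    _ = pd a (pd a (pd b (pd b h))) p := by
        refine pd_congr hU hp (fun y hy => ?_) a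
        exact pd_comm (h1 y hy b) a b

theorem oneD {g G : ℝ → ℝ} {L : ℝ} {T : Set ℝ} (hT : IsOpen T) (h0 : (0:ℝ) ∈ T)
    (hg : ∀ t ∈ T, HasDerivAt g (G t) t) (hG : HasDerivAt G L 0)
    (hmax : IsLocalMax g 0) : L ≤ 0 := by
  by_contra hL
  push_neg at hL
  have hG0 : G 0 = 0 := by
    have h1 : deriv g 0 = 0 := hmax.deriv_eq_zero
    have h2 : deriv g 0 = G 0 := (hg 0 h0).deriv
    linarith
  have hslope : Tendsto (fun t => G t / t) (𝓝[≠] (0:ℝ)) (𝓝 L) := by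
    have := hasDerivAt_iff_tendsto_slope.mp hG
    refine this.congr' ?_
    filter_upwards [self_mem_nhdsWithin] with t ht
    simp [slope, hG0, div_eq_inv_mul]
  have hev1 : ∀ᶠ t in 𝓝[≠] (0:ℝ), 0 < G t / t :=
    hslope.eventually (eventually_gt_nhds (half_lt_self hL) |>.mono
      fun y hy => lt_trans (half_pos hL) hy)
  have hev : ∀ᶠ t in 𝓝 (0:ℝ), (t ≠ 0 → 0 < G t / t) ∧ t ∈ T ∧ g t ≤ g 0 := by
    have h1 := eventually_nhdsWithin_iff.mp hev1
    filter_upwards [h1, hT.mem_nhds h0, hmax] with t ht1 ht2 ht3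
    exact ⟨fun h => ht1 h, ht2, ht3⟩
  obtain ⟨δ, hδ, H⟩ := Metric.eventually_nhds_iff.mp hev
  have hmem : ∀ t ∈ Icc (0:ℝ) (δ/2), (t ≠ 0 → 0 < G t / t) ∧ t ∈ T ∧ g t ≤ g 0 := by
    intro t ht
    refine H ?_
    rw [Real.dist_eq, sub_zero, abs_of_nonneg ht.1]
    linarith [ht.2]
  have hSM : StrictMonoOn g (Icc (0:ℝ) (δ/2)) := by
    refine strictMonoOn_of_deriv_pos (convex_Icc _ _) ?_ ?_
    · intro t ht
      exact ((hg t (hmem t ht).2.1).continuousAt).continuousWithinAt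
    · intro t ht
      rw [interior_Icc] at ht
      have htm := hmem t ⟨le_of_lt ht.1, le_of_lt ht.2⟩
      rw [(hg t htm.2.1).deriv]
      have := htm.1 (ne_of_gt ht.1)
      have ht0 : 0 < t := ht.1
      by_contra hc
      push_neg at hc
      nlinarith [div_nonpos_of_nonpos_of_nonneg hc (le_of_lt ht0)]
  have hδ2 : (0:ℝ) < δ/2 := by linarith
  have hgt : g 0 < g (δ/2) :=
    hSM (by constructor <;> [rfl; positivity]) ⟨le_of_lt hδ2, le_rfl⟩ hδ2
  have := (hmem (δ/2) ⟨le_of_lt hδ2, le_rfl⟩).2.2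
  linarith

theorem sdt {U : Set E} (hU : IsOpen U) {h : E → ℝ} {p : E} (hp : p ∈ U)
    (hh : ∀ y ∈ U, ContDiffAt ℝ (⊤:ℕ∞) h y) (hmax : IsLocalMax h p) (a : E) :
    pd a (pd a h) p ≤ 0 := by
  set φ : ℝ → E := fun t => p + t • a with hφ
  have hφc : Continuous φ := by fun_prop
  have hφ0 : φ 0 = p := by simp [hφ]
  have hφd : ∀ t : ℝ, HasDerivAt φ a t := by
    intro t
    have := ((hasDerivAt_id t).smul_const a).const_add p
    simp only [one_smul] at this
    exact this
  have hT : IsOpen (φ ⁻¹' U) := hU.preimage hφc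
  have h0T : (0:ℝ) ∈ φ ⁻¹' U := by simp [hφ0, hp]
  have hg : ∀ t ∈ φ ⁻¹' U, HasDerivAt (fun s => h (φ s)) (pd a h (φ t)) t := by
    intro t ht
    exact (((hh _ ht).differentiableAt coe1ne).hasFDerivAt).comp_hasDerivAt t (hφd t)
  have hG : HasDerivAt (fun s => pd a h (φ s)) (pd a (pd a h) p) 0 := by
    have hfd : HasFDerivAt (pd a h) (fderiv ℝ (pd a h) p) (φ 0) := by
      rw [hφ0]
      exact ((pd_smooth a (hh p hp)).differentiableAt coe1ne).hasFDerivAt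
    exact hfd.comp_hasDerivAt 0 (hφd 0)
  have hmax' : IsLocalMax (fun s => h (φ s)) 0 := by
    have h1 : IsLocalMax h (φ 0) := by rwa [hφ0]
    exact h1.comp_continuous hφc.continuousAt
  exact oneD hT h0T hg hG hmax'

end PD

theorem tangent_line {f : ℝ → ℝ} (hf : ContDiff ℝ (⊤:ℕ∞) f)
    (hconc : ∀ t, deriv (deriv f) t ≤ 0) (t : ℝ) :
    f 0 ≤ f t - deriv f t * t := by
  have hdf : Differentiable ℝ f := hf.differentiable coe1ne
  have hdf' : Differentiable ℝ (deriv f) :=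
    ((contDiff_infty_iff_deriv.mp hf).2).differentiable coe1ne
  have hanti : Antitone (deriv f) := antitone_of_deriv_nonpos hdf' hconc
  rcases lt_trichotomy t 0 with ht | ht | ht
  · obtain ⟨ξ, hξ, hs⟩ := exists_deriv_eq_slope f (by linarith : t < 0)
      (hdf.continuous.continuousOn) (hdf.differentiableOn)
    have h1 : deriv f ξ ≤ deriv f t := hanti (le_of_lt hξ.1)
    have h2 : deriv f ξ * (0 - t) = f 0 - f t := by
      rw [hs]
      exact div_mul_cancel₀ _ (by linarith)
    nlinarith
  · simp [ht]
  · obtain ⟨ξ, hξ, hs⟩ := exists_deriv_eq_slope f ht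
      (hdf.continuous.continuousOn) (hdf.differentiableOn)
    have h1 : deriv f t ≤ deriv f ξ := hanti (le_of_lt hξ.2)
    have h2 : deriv f ξ * (t - 0) = f t - f 0 := by
      rw [hs]
      exact div_mul_cancel₀ _ (by linarith)
    nlinarith

/-- The Laplacian of `u : ℝⁿ → ℝ`, as the sum of the second partial derivatives. -/
noncomputable def lap {n : ℕ} (u : EuclideanSpace ℝ (Fin n) → ℝ)
    (x : EuclideanSpace ℝ (Fin n)) : ℝ :=
  ∑ i : Fin n, fderiv ℝ (fun y => fderiv ℝ u y (EuclideanSpace.single i (1 : ℝ))) x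
    (EuclideanSpace.single i (1 : ℝ))

/-- The second directional derivative `u_ee` of `u` in direction `e`. -/
noncomputable def dd {n : ℕ} (u : EuclideanSpace ℝ (Fin n) → ℝ)
    (e : EuclideanSpace ℝ (Fin n)) (x : EuclideanSpace ℝ (Fin n)) : ℝ :=
  fderiv ℝ (fun y => fderiv ℝ u y e) x e

/-- with `Q_A = u_ee - A·u - σ·A·x₁` where
`σ = f(0)/(sup_{closure Ω}|x₁ f'(u)| + 1)`, the function `Q_A` cannot attain a maximum
value `0` at an interior point of `Ω`. -/
theorem stmt_13 (n : ℕ) (hn : 0 < n) (Ω : Set (EuclideanSpace ℝ (Fin n)))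
    (hopen : IsOpen Ω) (hbdd : Bornology.IsBounded Ω)
    (c : ℝ) (hc : 0 < c) (hhalf : Ω ⊆ {x : EuclideanSpace ℝ (Fin n) | c ≤ x ⟨0, hn⟩})
    (f : ℝ → ℝ) (hf : ContDiff ℝ (⊤ : ℕ∞) f)
    (hfpos : ∀ t, 0 < f t) (hfconc : ∀ t, deriv (deriv f) t ≤ 0)
    (u : EuclideanSpace ℝ (Fin n) → ℝ) (hu : ContDiffOn ℝ (⊤ : ℕ∞) u (closure Ω))
    (hpde : ∀ x ∈ Ω, -lap u x = f (u x))
    (hbc : ∀ x ∈ frontier Ω, u x = 0)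
    (e : EuclideanSpace ℝ (Fin n)) (he : ‖e‖ = 1)
    (A σ : ℝ) (hA : 0 < A)
    (hσ : σ = f 0 /
      (sSup ((fun x : EuclideanSpace ℝ (Fin n) => |x ⟨0, hn⟩ * deriv f (u x)|) ''
        closure Ω) + 1)) :
    ¬ ∃ p ∈ Ω, (dd u e p - A * u p - σ * A * p ⟨0, hn⟩ = 0 ∧
      ∀ x ∈ Ω, dd u e x - A * u x - σ * A * x ⟨0, hn⟩ ≤ 0) := by
  rintro ⟨p, hp, hQ0, hQle⟩
  classical
  set i0 : Fin n := ⟨0, hn⟩ with hi0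
  set E1 : Fin n → EuclideanSpace ℝ (Fin n) := fun i => EuclideanSpace.single i (1:ℝ) with hE1
  -- smoothness
  have hsm : ∀ y ∈ Ω, ContDiffAt ℝ (⊤:ℕ∞) u y := fun y hy =>
    (hu.contDiffAt (mem_nhds_iff.mpr ⟨Ω, subset_closure, hopen, hy⟩)).of_le (by simp)
  have hfs : ContDiff ℝ (⊤:ℕ∞) f := hf.of_le (by simp)
  have hdf : Differentiable ℝ f := hfs.differentiable coe1ne
  have hdf' : Differentiable ℝ (deriv f) :=
    ((contDiff_infty_iff_deriv.mp hfs).2).differentiable coe1ne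
  set W : EuclideanSpace ℝ (Fin n) → ℝ := pd e (pd e u) with hWdef
  set Q : EuclideanSpace ℝ (Fin n) → ℝ :=
    fun x => W x - A * u x - σ * A * x i0 with hQdef
  have hQeq : ∀ x, dd u e x - A * u x - σ * A * x i0 = Q x := fun x => rfl
  have hprojeq : (fun x : EuclideanSpace ℝ (Fin n) => x i0)
      = ⇑(EuclideanSpace.proj (𝕜 := ℝ) i0) := by
    funext x
    simp
  -- smoothness of Q on Ω
  have hQsm : ∀ y ∈ Ω, ContDiffAt ℝ (⊤:ℕ∞) Q y := by
    intro y hy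
    have h1 : ContDiffAt ℝ (⊤:ℕ∞) W y := pd_smooth e (pd_smooth e (hsm y hy))
    have h2 : ContDiffAt ℝ (⊤:ℕ∞) (fun x : EuclideanSpace ℝ (Fin n) => A * u x) y :=
      contDiffAt_const.mul (hsm y hy)
    have hproj : ContDiff ℝ (⊤:ℕ∞) (fun x : EuclideanSpace ℝ (Fin n) => x i0) := by
      rw [hprojeq]
      exact (EuclideanSpace.proj (𝕜 := ℝ) i0).contDiff
    have h3 : ContDiffAt ℝ (⊤:ℕ∞) (fun x : EuclideanSpace ℝ (Fin n) => σ * A * x i0) y :=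
      contDiffAt_const.mul hproj.contDiffAt
    exact (h1.sub h2).sub h3
  -- local max of Q at p
  have hQmax : IsLocalMax Q p := by
    have hQp : Q p = 0 := by rw [← hQeq p]; exact hQ0
    show ∀ᶠ y in 𝓝 p, Q y ≤ Q p
    filter_upwards [hopen.mem_nhds hp] with y hy
    rw [hQp, ← hQeq y]
    exact hQle y hy
  -- second derivative test
  have hΔQ : ∑ i : Fin n, pd (E1 i) (pd (E1 i) Q) p ≤ 0 :=
    Finset.sum_nonpos fun i _ => sdt hopen hp hQsm hQmax (E1 i)
  -- first derivative decomposition of Q on Ω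
  have hQd : ∀ (a : EuclideanSpace ℝ (Fin n)), ∀ y ∈ Ω,
      pd a Q y = pd a W y - A * pd a u y - σ * A * a i0 := by
    intro a y hy
    have h1 : DifferentiableAt ℝ W y :=
      (pd_smooth e (pd_smooth e (hsm y hy))).differentiableAt coe1ne
    have h2 : DifferentiableAt ℝ u y := (hsm y hy).differentiableAt coe1ne
    have hproj : HasFDerivAt (fun x : EuclideanSpace ℝ (Fin n) => x i0)
        (EuclideanSpace.proj (𝕜 := ℝ) i0) y := by
      rw [hprojeq]
      exact (EuclideanSpace.proj (𝕜 := ℝ) i0).hasFDerivAt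
    have hQ' : HasFDerivAt Q
        (fderiv ℝ W y - A • fderiv ℝ u y - (σ * A) • (EuclideanSpace.proj (𝕜 := ℝ) i0)) y :=
      (h1.hasFDerivAt.sub (h2.hasFDerivAt.const_mul A)).sub (hproj.const_mul (σ * A))
    show fderiv ℝ Q y a = _
    rw [hQ'.fderiv]
    simp [pd]
  -- second derivative decomposition at p
  have hQdd : ∀ a : EuclideanSpace ℝ (Fin n),
      pd a (pd a Q) p = pd a (pd a W) p - A * pd a (pd a u) p := by
    intro a
    have e1 : pd a (pd a Q) p
        = pd a (fun y => pd a W y - A * pd a u y - σ * A * a i0) p :=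
      pd_congr hopen hp (fun y hy => hQd a y hy) a
    rw [e1]
    have h1 : DifferentiableAt ℝ (pd a W) p :=
      (pd_smooth a (pd_smooth e (pd_smooth e (hsm p hp)))).differentiableAt coe1ne
    have h2 : DifferentiableAt ℝ (pd a u) p :=
      (pd_smooth a (hsm p hp)).differentiableAt coe1ne
    have hD : HasFDerivAt (fun y => pd a W y - A * pd a u y - σ * A * a i0)
        (fderiv ℝ (pd a W) p - A • fderiv ℝ (pd a u) p - 0) p :=
      (h1.hasFDerivAt.sub (h2.hasFDerivAt.const_mul A)).sub (hasFDerivAt_const _ _)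
    show fderiv ℝ (fun y => pd a W y - A * pd a u y - σ * A * a i0) p a = _
    rw [hD.fderiv]
    simp [pd]
  -- PDE on Ω
  have hlapeq : ∀ y ∈ Ω, lap u y = -(f (u y)) := fun y hy => by
    have := hpde y hy; linarith
  have hlapde : ∀ x, lap u x = ∑ i : Fin n, pd (E1 i) (pd (E1 i) u) x := fun x => rfl
  -- commutation of fourth derivatives
  have hcomm : ∀ i : Fin n,
      pd (E1 i) (pd (E1 i) W) p = pd e (pd e (pd (E1 i) (pd (E1 i) u))) p :=
    fun i => ddcomm hopen hsm hp e (E1 i)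
  -- pull the sum through two derivatives
  have hsum1 : ∀ y ∈ Ω, pd e (lap u) y = ∑ i : Fin n, pd e (pd (E1 i) (pd (E1 i) u)) y := by
    intro y hy
    have hdiff : ∀ i ∈ Finset.univ, DifferentiableAt ℝ
        (fun x => pd (E1 i) (pd (E1 i) u) x) y :=
      fun i _ => (pd_smooth (E1 i) (pd_smooth (E1 i) (hsm y hy))).differentiableAt coe1ne
    show fderiv ℝ (lap u) y e = _
    rw [show lap u = fun x => ∑ i : Fin n, pd (E1 i) (pd (E1 i) u) x from rfl,
      fderiv_fun_sum hdiff]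
    rw [ContinuousLinearMap.sum_apply]
    rfl
  have hsum2 : pd e (pd e (lap u)) p
      = ∑ i : Fin n, pd e (pd e (pd (E1 i) (pd (E1 i) u))) p := by
    rw [pd_congr hopen hp hsum1 e]
    have hdiff : ∀ i ∈ Finset.univ, DifferentiableAt ℝ
        (fun x => pd e (pd (E1 i) (pd (E1 i) u)) x) p :=
      fun i _ => (pd_smooth e (pd_smooth (E1 i)
        (pd_smooth (E1 i) (hsm p hp)))).differentiableAt coe1ne
    show fderiv ℝ (fun y => ∑ i : Fin n, pd e (pd (E1 i) (pd (E1 i) u)) y) p e = _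
    rw [fderiv_fun_sum hdiff]
    rw [ContinuousLinearMap.sum_apply]
    rfl
  -- substitute the PDE
  have hsub : pd e (pd e (lap u)) p = pd e (pd e (fun x => -(f (u x)))) p := by
    refine pd_congr hopen hp (fun y hy => ?_) e
    exact pd_congr hopen hy hlapeq e
  -- chain rule, first derivative
  have hchain1 : ∀ y ∈ Ω, pd e (fun x => -(f (u x))) y = -(deriv f (u y) * pd e u y) := by
    intro y hy
    have hud : DifferentiableAt ℝ u y := (hsm y hy).differentiableAt coe1ne
    have hfd : HasDerivAt f (deriv f (u y)) (u y) := (hdf (u y)).hasDerivAt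
    have hcomp : HasFDerivAt (fun x => f (u x)) (deriv f (u y) • fderiv ℝ u y) y :=
      hfd.comp_hasFDerivAt y hud.hasFDerivAt
    have hneg := hcomp.fun_neg
    show fderiv ℝ (fun x => -(f (u x))) y e = _
    rw [hneg.fderiv]
    simp [pd]
  -- chain rule, second derivative
  have hchain2 : pd e (pd e (fun x => -(f (u x)))) p
      = -(deriv (deriv f) (u p) * pd e u p * pd e u p
          + deriv f (u p) * pd e (pd e u) p) := by
    rw [pd_congr hopen hp hchain1 e]
    have hud : DifferentiableAt ℝ u p := (hsm p hp).differentiableAt coe1ne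
    have hvd : DifferentiableAt ℝ (pd e u) p :=
      (pd_smooth e (hsm p hp)).differentiableAt coe1ne
    have hc : HasFDerivAt (fun y => deriv f (u y))
        (deriv (deriv f) (u p) • fderiv ℝ u p) p :=
      ((hdf' (u p)).hasDerivAt).comp_hasFDerivAt p hud.hasFDerivAt
    have hmul : HasFDerivAt (fun y => deriv f (u y) * pd e u y)
        (deriv f (u p) • fderiv ℝ (pd e u) p
          + pd e u p • (deriv (deriv f) (u p) • fderiv ℝ u p)) p :=
      hc.mul hvd.hasFDerivAt
    have hneg := hmul.fun_neg
    show fderiv ℝ (fun y => -(deriv f (u y) * pd e u y)) p e = _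
    rw [hneg.fderiv]
    simp [pd]
    ring
  -- assemble the Laplacian computation
  have hWsum : ∑ i : Fin n, pd (E1 i) (pd (E1 i) W) p
      = -(deriv (deriv f) (u p) * pd e u p * pd e u p
          + deriv f (u p) * pd e (pd e u) p) := by
    rw [Finset.sum_congr rfl (fun i _ => hcomm i), ← hsum2, hsub, hchain2]
  have hlapQ : ∑ i : Fin n, pd (E1 i) (pd (E1 i) Q) p
      = ∑ i : Fin n, pd (E1 i) (pd (E1 i) W) p - A * lap u p := by
    rw [Finset.sum_congr rfl (fun i _ => hQdd (E1 i)), Finset.sum_sub_distrib,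
      ← Finset.mul_sum, hlapde p]
  have hlapup : lap u p = -(f (u p)) := hlapeq p hp
  have hineq : -(deriv (deriv f) (u p) * pd e u p * pd e u p
      + deriv f (u p) * pd e (pd e u) p) + A * f (u p) ≤ 0 := by
    have h := hΔQ
    rw [hlapQ, hWsum, hlapup] at h
    linarith
  -- the value of u_ee at p
  have hw : pd e (pd e u) p = A * u p + σ * A * p i0 := by
    have h0 : W p - A * u p - σ * A * p i0 = 0 := hQ0
    have : W p = pd e (pd e u) p := rfl
    linarith [h0]
  -- sup bound
  have hK : IsCompact (closure Ω) := hbdd.isCompact_closure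
  have hcont : ContinuousOn (fun x : EuclideanSpace ℝ (Fin n) =>
      |x i0 * deriv f (u x)|) (closure Ω) := by
    apply ContinuousOn.abs
    apply ContinuousOn.mul
    · rw [hprojeq]
      exact (EuclideanSpace.proj (𝕜 := ℝ) i0).continuous.continuousOn
    · exact hdf'.continuous.comp_continuousOn hu.continuousOn
  have hbd : BddAbove ((fun x : EuclideanSpace ℝ (Fin n) =>
      |x i0 * deriv f (u x)|) '' closure Ω) := hK.bddAbove_image hcont
  set M : ℝ := sSup ((fun x : EuclideanSpace ℝ (Fin n) =>
      |x i0 * deriv f (u x)|) '' closure Ω) with hMdef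
  have hMmem : |p i0 * deriv f (u p)| ≤ M :=
    le_csSup hbd ⟨p, subset_closure hp, rfl⟩
  have hM0 : 0 ≤ M := le_trans (abs_nonneg _) hMmem
  have hσval : σ = f 0 / (M + 1) := hσ
  have hσpos : 0 < σ := by
    rw [hσval]
    have := hfpos 0
    positivity
  have hσM : σ * M < f 0 := by
    rw [hσval, div_mul_eq_mul_div, div_lt_iff₀ (by linarith : (0:ℝ) < M + 1)]
    nlinarith [hfpos 0]
  have htang : f 0 ≤ f (u p) - deriv f (u p) * u p := tangent_line hfs hfconc (u p)
  have hconc2 : deriv (deriv f) (u p) ≤ 0 := hfconc (u p)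
  -- final contradiction
  have h1 : A * f (u p) ≤ deriv f (u p) * pd e (pd e u) p := by
    nlinarith [mul_self_nonneg (pd e u p)]
  have h2 : deriv f (u p) * pd e (pd e u) p
      = A * (deriv f (u p) * u p) + σ * A * (deriv f (u p) * p i0) := by
    rw [hw]; ring
  have h3 : deriv f (u p) * p i0 ≤ |p i0 * deriv f (u p)| := by
    rw [mul_comm]
    exact le_abs_self _
  have h4 : σ * A * (deriv f (u p) * p i0) ≤ σ * A * M := by
    apply mul_le_mul_of_nonneg_left (le_trans h3 hMmem)
    positivity
  have h6 : A * f 0 ≤ A * (f (u p) - deriv f (u p) * u p) :=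
    mul_le_mul_of_nonneg_left htang (le_of_lt hA)
  have h7 : σ * A * M < A * f 0 := by
    have := mul_lt_mul_of_pos_left hσM hA
    linarith
  have hfinal : A * f 0 < A * f 0 := by
    calc A * f 0 ≤ A * (f (u p) - deriv f (u p) * u p) := h6
    _ = A * f (u p) - A * (deriv f (u p) * u p) := by ring
    _ ≤ deriv f (u p) * pd e (pd e u) p - A * (deriv f (u p) * u p) := by linarith
    _ = σ * A * (deriv f (u p) * p i0) := by rw [h2]; ring
    _ ≤ σ * A * M := h4
    _ < A * f 0 := h7
  exact lt_irrefl _ hfinal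
end
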